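/- For every k ∈ ℝ the integrals ∫_ℝ ψ₀(x)·E_k(x) dx and ∫_ℝ ψ₁(x)·E_k(x) dx converge absolutely and both equal 0; i.e. the generalized eigenfunctions of the continuous spectrum are orthogonal to the discrete eigenfunctions. -/

import Mathlib

open MeasureTheory

noncomputable def sech (x : ℝ) : ℝ := 1 / Real.cosh x

noncomputable def ψ₀ (m x : ℝ) : ℝ := Real.sqrt (3 * m / 4) * (sech (m * x)) ^ 2

noncomputable def ψ₁ (m x : ℝ) : ℝ :=
  Real.sqrt (3 * m / 2) * Real.tanh (m * x) * sech (m * x)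

noncomputable def cNorm (m k : ℝ) : ℂ :=
  if 0 ≤ k then -(k : ℂ) ^ 2 - 3 * Complex.I * (m : ℂ) * (k : ℂ) + 2 * (m : ℂ) ^ 2
  else -(k : ℂ) ^ 2 + 3 * Complex.I * (m : ℂ) * (k : ℂ) + 2 * (m : ℂ) ^ 2

noncomputable def genEig (m k : ℝ) (x : ℝ) : ℂ :=
  cNorm m k *
    (-(k : ℂ) ^ 2 - 3 * Complex.I * (m : ℂ) * (k : ℂ) * (Real.tanh (m * x) : ℂ)
      + 2 * (m : ℂ) ^ 2 - 3 * (m : ℂ) ^ 2 * (sech (m * x) : ℂ) ^ 2) *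
    Complex.exp (Complex.I * (k : ℂ) * (x : ℂ)) /
    (((k : ℂ) ^ 2 + (m : ℂ) ^ 2) * ((k : ℂ) ^ 2 + 4 * (m : ℂ) ^ 2))

/-! ### Auxiliary lemmas -/

open Real Filter Set

section aux

lemma sech_pos (y : ℝ) : 0 < sech y := by unfold sech; positivity

lemma sech_le_one (y : ℝ) : sech y ≤ 1 := by
  unfold sech
  rw [div_le_one (Real.cosh_pos y)]
  exact Real.one_le_cosh y

lemma tanh_sq_add_sech_sq (y : ℝ) : Real.tanh y ^ 2 + sech y ^ 2 = 1 := by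
  have h := Real.cosh_pos y
  have h2 := Real.cosh_sq_sub_sinh_sq y
  unfold sech
  rw [Real.tanh_eq_sinh_div_cosh]
  field_simp
  linarith

lemma abs_tanh_le_one (y : ℝ) : |Real.tanh y| ≤ 1 := by
  have h := tanh_sq_add_sech_sq y
  have h2 := sech_pos y
  nlinarith [sq_abs (Real.tanh y), abs_nonneg (Real.tanh y)]

lemma hasDerivAt_tanh' (y : ℝ) : HasDerivAt Real.tanh (sech y ^ 2) y := by
  have h := (Real.hasDerivAt_sinh y).div (Real.hasDerivAt_cosh y) (Real.cosh_pos y).ne'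
  have he : (fun t => Real.sinh t / Real.cosh t) = Real.tanh := by
    funext t; rw [Real.tanh_eq_sinh_div_cosh]
  rw [show (Real.sinh / Real.cosh) = fun t => Real.sinh t / Real.cosh t from rfl, he] at h
  convert h using 1
  · rfl
  · rfl
  have h2 := Real.cosh_sq_sub_sinh_sq y
  have h3 := (Real.cosh_pos y).ne'
  unfold sech
  field_simp
  linarith

lemma hasDerivAt_sech (y : ℝ) : HasDerivAt sech (-(sech y * Real.tanh y)) y := by
  have h := ((hasDerivAt_const y (1:ℝ)).div (Real.hasDerivAt_cosh y) (Real.cosh_pos y).ne')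
  have he : (fun t => (1:ℝ) / Real.cosh t) = sech := by funext t; rfl
  rw [show ((fun _ => (1:ℝ)) / Real.cosh) = fun t => (1:ℝ) / Real.cosh t from rfl, he] at h
  convert h using 1
  · rfl
  · rfl
  have h3 := (Real.cosh_pos y).ne'
  unfold sech
  rw [Real.tanh_eq_sinh_div_cosh, eq_div_iff (by positivity)]
  field_simp
  ring

lemma continuous_tanh' : Continuous Real.tanh :=
  continuous_iff_continuousAt.mpr fun y => (hasDerivAt_tanh' y).continuousAt

lemma sech_le_two_exp_neg (y : ℝ) : sech y ≤ 2 * Real.exp (-y) := by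
  have h1 : Real.exp y / 2 ≤ Real.cosh y := by
    rw [Real.cosh_eq]; have := (Real.exp_pos (-y)).le; linarith
  have h2 := Real.cosh_pos y
  have h3 : Real.exp (-y) * Real.exp y = 1 := by rw [← Real.exp_add]; simp
  unfold sech
  rw [div_le_iff₀ h2]
  nlinarith [Real.exp_pos y, Real.exp_pos (-y)]

lemma sech_le_two_exp (y : ℝ) : sech y ≤ 2 * Real.exp y := by
  have h1 : Real.exp (-y) / 2 ≤ Real.cosh y := by
    rw [Real.cosh_eq]; have := (Real.exp_pos y).le; linarith
  have h2 := Real.cosh_pos y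
  have h3 : Real.exp (-y) * Real.exp y = 1 := by rw [← Real.exp_add]; simp
  unfold sech
  rw [div_le_iff₀ h2]
  nlinarith [Real.exp_pos y, Real.exp_pos (-y)]

lemma continuous_sech_mul (m : ℝ) : Continuous (fun x : ℝ => sech (m * x)) := by
  unfold sech
  exact continuous_const.div (Real.continuous_cosh.comp (continuous_const.mul continuous_id))
    (fun x => (Real.cosh_pos _).ne')

lemma integrable_sech_mul {m : ℝ} (hm : 0 < m) : Integrable (fun x : ℝ => sech (m * x)) := by
  have hIoi : IntegrableOn (fun x : ℝ => sech (m * x)) (Ioi 0) := by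
    refine Integrable.mono' ((exp_neg_integrableOn_Ioi 0 hm).const_mul 2)
      (continuous_sech_mul m).aestronglyMeasurable.restrict ?_
    refine Eventually.of_forall fun x => ?_
    rw [Real.norm_eq_abs, abs_of_pos (sech_pos _)]
    simpa [neg_mul] using sech_le_two_exp_neg (m * x)
  rw [← integrableOn_univ, ← @Iio_union_Ici _ _ (0 : ℝ), integrableOn_union,
    integrableOn_Ici_iff_integrableOn_Ioi]
  refine ⟨?_, hIoi⟩
  rw [← (Measure.measurePreserving_neg (volume : Measure ℝ)).integrableOn_comp_preimage
      (Homeomorph.neg ℝ).measurableEmbedding]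
  simp only [Function.comp_def, neg_preimage, neg_Iio, neg_neg, neg_zero, mul_neg]
  have heq : (fun x : ℝ => sech (-(m * x))) = fun x : ℝ => sech (m * x) := by
    funext x; unfold sech; rw [Real.cosh_neg]
  rw [heq]
  exact hIoi

lemma tendsto_sech_mul_atTop {m : ℝ} (hm : 0 < m) :
    Tendsto (fun x : ℝ => sech (m * x)) atTop (nhds 0) := by
  have h1 : Tendsto (fun x : ℝ => 2 * Real.exp (-(m * x))) atTop (nhds 0) := by
    have h2 : Tendsto (fun x : ℝ => -(m * x)) atTop atBot := by
      exact tendsto_neg_atTop_atBot.comp (tendsto_id.const_mul_atTop hm)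
    simpa using (Real.tendsto_exp_atBot.comp h2).const_mul 2
  refine tendsto_of_tendsto_of_tendsto_of_le_of_le tendsto_const_nhds h1
    (fun x => (sech_pos _).le) (fun x => sech_le_two_exp_neg (m * x))

lemma tendsto_sech_mul_atBot {m : ℝ} (hm : 0 < m) :
    Tendsto (fun x : ℝ => sech (m * x)) atBot (nhds 0) := by
  have h1 : Tendsto (fun x : ℝ => 2 * Real.exp (m * x)) atBot (nhds 0) := by
    have h2 : Tendsto (fun x : ℝ => m * x) atBot atBot := by
      exact tendsto_id.const_mul_atBot hm
    simpa using (Real.tendsto_exp_atBot.comp h2).const_mul 2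
  refine tendsto_of_tendsto_of_tendsto_of_le_of_le tendsto_const_nhds h1
    (fun x => (sech_pos _).le) (fun x => sech_le_two_exp (m * x))

lemma cS_sq (m : ℝ) (x : ℝ) :
    ((sech (m * x) : ℝ) : ℂ) ^ 2 = 1 - ((Real.tanh (m * x) : ℝ) : ℂ) ^ 2 := by
  have h : ((Real.tanh (m * x) ^ 2 + sech (m * x) ^ 2 : ℝ) : ℂ) = 1 := by
    rw [tanh_sq_add_sech_sq]; norm_num
  rw [Complex.ofReal_add, Complex.ofReal_pow, Complex.ofReal_pow] at h
  linear_combination h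

lemma hasDerivAt_mul' (m : ℝ) (x : ℝ) : HasDerivAt (fun x : ℝ => m * x) m x := by
  simpa using (hasDerivAt_id x).const_mul m

lemma hasDerivAt_cT (m : ℝ) (x : ℝ) :
    HasDerivAt (fun x : ℝ => ((Real.tanh (m * x) : ℝ) : ℂ))
      ((m : ℂ) * (1 - ((Real.tanh (m * x) : ℝ) : ℂ) ^ 2)) x := by
  have h : HasDerivAt (fun x : ℝ => Real.tanh (m * x)) (sech (m * x) ^ 2 * m) x := by
    simpa [Function.comp_def] using (hasDerivAt_tanh' (m * x)).comp x (hasDerivAt_mul' m x)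
  have h2 := h.ofReal_comp
  convert h2 using 1
  rw [Complex.ofReal_mul, Complex.ofReal_pow, cS_sq]
  ring

lemma hasDerivAt_cS (m : ℝ) (x : ℝ) :
    HasDerivAt (fun x : ℝ => ((sech (m * x) : ℝ) : ℂ))
      (-((m : ℂ) * ((sech (m * x) : ℝ) : ℂ) * ((Real.tanh (m * x) : ℝ) : ℂ))) x := by
  have h : HasDerivAt (fun x : ℝ => sech (m * x))
      (-(sech (m * x) * Real.tanh (m * x)) * m) x := by
    simpa [Function.comp_def] using (hasDerivAt_sech (m * x)).comp x (hasDerivAt_mul' m x)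
  have h2 := h.ofReal_comp
  convert h2 using 1
  rw [Complex.ofReal_mul, Complex.ofReal_neg, Complex.ofReal_mul]
  ring

lemma hasDerivAt_cE (k : ℝ) (x : ℝ) :
    HasDerivAt (fun x : ℝ => Complex.exp (Complex.I * (k : ℂ) * (x : ℂ)))
      (Complex.I * (k : ℂ) * Complex.exp (Complex.I * (k : ℂ) * (x : ℂ))) x := by
  have h0 : HasDerivAt (fun x : ℝ => ((x : ℝ) : ℂ)) 1 x := (hasDerivAt_id x).ofReal_comp
  have h1 : HasDerivAt (fun x : ℝ => Complex.I * (k : ℂ) * (x : ℂ))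
      (Complex.I * (k : ℂ)) x := by
    simpa using h0.const_mul (Complex.I * (k : ℂ))
  simpa [mul_comm] using h1.cexp

noncomputable def K₀ (m k : ℝ) : ℂ :=
  ((Real.sqrt (3 * m / 4) : ℝ) : ℂ) * cNorm m k /
    (((k : ℂ) ^ 2 + (m : ℂ) ^ 2) * ((k : ℂ) ^ 2 + 4 * (m : ℂ) ^ 2))

noncomputable def g₀ (m k : ℝ) (x : ℝ) : ℂ :=
  K₀ m k * (Complex.exp (Complex.I * (k : ℂ) * (x : ℂ)) *
    ((1 - ((Real.tanh (m * x) : ℝ) : ℂ) * ((Real.tanh (m * x) : ℝ) : ℂ)) *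
      (Complex.I * (k : ℂ) - (m : ℂ) * ((Real.tanh (m * x) : ℝ) : ℂ))))

noncomputable def K₁ (m k : ℝ) : ℂ :=
  ((Real.sqrt (3 * m / 2) : ℝ) : ℂ) * cNorm m k /
    (((k : ℂ) ^ 2 + (m : ℂ) ^ 2) * ((k : ℂ) ^ 2 + 4 * (m : ℂ) ^ 2))

noncomputable def g₁ (m k : ℝ) (x : ℝ) : ℂ :=
  K₁ m k * (Complex.exp (Complex.I * (k : ℂ) * (x : ℂ)) *
    (((sech (m * x) : ℝ) : ℂ) *
      (Complex.I * (k : ℂ) * ((Real.tanh (m * x) : ℝ) : ℂ) -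
        (m : ℂ) * (1 + ((Real.tanh (m * x) : ℝ) : ℂ) * ((Real.tanh (m * x) : ℝ) : ℂ)))))

lemma hne1 (m k : ℝ) (hm : 0 < m) : ((k : ℂ) ^ 2 + (m : ℂ) ^ 2) ≠ 0 := by
  have h : ((k : ℂ) ^ 2 + (m : ℂ) ^ 2) = ((k ^ 2 + m ^ 2 : ℝ) : ℂ) := by push_cast; ring
  rw [h]
  exact Complex.ofReal_ne_zero.mpr (by positivity)

lemma hne2 (m k : ℝ) (hm : 0 < m) : ((k : ℂ) ^ 2 + 4 * (m : ℂ) ^ 2) ≠ 0 := by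
  have h : ((k : ℂ) ^ 2 + 4 * (m : ℂ) ^ 2) = ((k ^ 2 + 4 * m ^ 2 : ℝ) : ℂ) := by
    push_cast; ring
  rw [h]
  exact Complex.ofReal_ne_zero.mpr (by positivity)

lemma hasDerivAt_g0 (m k : ℝ) (hm : 0 < m) (x : ℝ) :
    HasDerivAt (g₀ m k) (((ψ₀ m x : ℝ) : ℂ) * genEig m k x) x := by
  have hT := hasDerivAt_cT m x
  have hE := hasDerivAt_cE k x
  have h1 := (hasDerivAt_const x (1 : ℂ)).sub (hT.mul hT)
  have h2 := (hasDerivAt_const x (Complex.I * (k : ℂ))).sub (hT.const_mul (m : ℂ))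
  have h5 := ((hE.mul (h1.mul h2)).const_mul (K₀ m k))
  convert h5 using 1
  · rfl
  · rfl
  simp only [ψ₀, genEig, K₀, Pi.sub_apply, Pi.mul_apply]
  rw [Complex.ofReal_mul, Complex.ofReal_pow, cS_sq]
  field_simp [hne1 m k hm, hne2 m k hm]
  ring_nf
  simp only [Complex.I_sq]
  ring

lemma hasDerivAt_g1 (m k : ℝ) (hm : 0 < m) (x : ℝ) :
    HasDerivAt (g₁ m k) (((ψ₁ m x : ℝ) : ℂ) * genEig m k x) x := by
  have hT := hasDerivAt_cT m x
  have hS := hasDerivAt_cS m x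
  have hE := hasDerivAt_cE k x
  have h1 := (hT.const_mul (Complex.I * (k : ℂ))).sub
    (((hasDerivAt_const x (1 : ℂ)).add (hT.mul hT)).const_mul (m : ℂ))
  have h5 := ((hE.mul (hS.mul h1)).const_mul (K₁ m k))
  convert h5 using 1
  · rfl
  · rfl
  simp only [ψ₁, genEig, K₁, Pi.sub_apply, Pi.mul_apply, Pi.add_apply]
  rw [Complex.ofReal_mul, Complex.ofReal_mul, cS_sq]
  field_simp [hne1 m k hm, hne2 m k hm]
  ring_nf
  simp only [Complex.I_sq]
  ring

lemma norm_cexp_Ikx (k x : ℝ) : ‖Complex.exp (Complex.I * (k : ℂ) * (x : ℂ))‖ = 1 := by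
  rw [Complex.norm_exp]
  simp [Complex.mul_re]

lemma norm_P_le (m k x : ℝ) :
    ‖(-(k : ℂ) ^ 2 - 3 * Complex.I * (m : ℂ) * (k : ℂ) * (Real.tanh (m * x) : ℂ)
      + 2 * (m : ℂ) ^ 2 - 3 * (m : ℂ) ^ 2 * ((sech (m * x) : ℝ) : ℂ) ^ 2)‖
      ≤ k ^ 2 + 3 * |m| * |k| + 2 * m ^ 2 + 3 * m ^ 2 := by
  have ht := abs_tanh_le_one (m * x)
  have hs0 := (sech_pos (m * x)).le
  have hs1 := sech_le_one (m * x)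
  have key : ‖(-(k : ℂ) ^ 2 - 3 * Complex.I * (m : ℂ) * (k : ℂ) * (Real.tanh (m * x) : ℂ)
      + 2 * (m : ℂ) ^ 2 - 3 * (m : ℂ) ^ 2 * ((sech (m * x) : ℝ) : ℂ) ^ 2)‖
      ≤ ‖(-(k : ℂ) ^ 2)‖ + ‖3 * Complex.I * (m : ℂ) * (k : ℂ) * (Real.tanh (m * x) : ℂ)‖
        + ‖2 * (m : ℂ) ^ 2‖ + ‖3 * (m : ℂ) ^ 2 * ((sech (m * x) : ℝ) : ℂ) ^ 2‖ := by
    refine le_trans (norm_sub_le _ _) ?_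
    gcongr
    refine le_trans (norm_add_le _ _) ?_
    gcongr
    exact norm_sub_le _ _
  simp only [norm_neg, norm_mul, norm_pow, Complex.norm_real, Complex.norm_I,
    Real.norm_eq_abs, Complex.norm_ofNat, Complex.norm_natCast] at key
  have h1 : |k| ^ 2 = k ^ 2 := sq_abs k
  have h2 : |m| ^ 2 = m ^ 2 := sq_abs m
  have h3 : |sech (m * x)| ^ 2 ≤ 1 := by
    rw [abs_of_nonneg hs0]; nlinarith
  have h4 : 3 * 1 * |m| * |k| * |Real.tanh (m * x)| ≤ 3 * |m| * |k| := by
    have := mul_nonneg (mul_nonneg (by norm_num : (0:ℝ) ≤ 3) (abs_nonneg m)) (abs_nonneg k)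
    nlinarith
  have h5 : 3 * |m| ^ 2 * |sech (m * x)| ^ 2 ≤ 3 * m ^ 2 := by nlinarith [sq_nonneg m]
  linarith

lemma norm_genEig_le (m k : ℝ) (hm : 0 < m) (x : ℝ) :
    ‖genEig m k x‖ ≤ ‖cNorm m k‖ * (k ^ 2 + 3 * |m| * |k| + 2 * m ^ 2 + 3 * m ^ 2) /
      ((k ^ 2 + m ^ 2) * (k ^ 2 + 4 * m ^ 2)) := by
  have hD : ‖(((k : ℂ) ^ 2 + (m : ℂ) ^ 2) * ((k : ℂ) ^ 2 + 4 * (m : ℂ) ^ 2))‖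
      = (k ^ 2 + m ^ 2) * (k ^ 2 + 4 * m ^ 2) := by
    have h : (((k : ℂ) ^ 2 + (m : ℂ) ^ 2) * ((k : ℂ) ^ 2 + 4 * (m : ℂ) ^ 2))
        = ((((k ^ 2 + m ^ 2) * (k ^ 2 + 4 * m ^ 2)) : ℝ) : ℂ) := by push_cast; ring
    rw [h, Complex.norm_real, Real.norm_eq_abs, abs_of_pos (by positivity)]
  unfold genEig
  rw [norm_div, norm_mul, norm_mul, norm_cexp_Ikx, mul_one, hD]
  gcongr
  exact norm_P_le m k x

end aux

/-- The generalized eigenfunctions `E_k` of the continuous spectrum are orthogonal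
to the discrete eigenfunctions `ψ₀`, `ψ₁`: for every `k ∈ ℝ` the products
`ψ₀·E_k` and `ψ₁·E_k` are (absolutely) integrable and their integrals vanish. -/
theorem continuum_orthogonal_to_discrete (m : ℝ) (hm : 0 < m) (k : ℝ) :
    (Integrable (fun x : ℝ => (ψ₀ m x : ℂ) * genEig m k x) ∧
      ∫ x : ℝ, (ψ₀ m x : ℂ) * genEig m k x = 0) ∧
    (Integrable (fun x : ℝ => (ψ₁ m x : ℂ) * genEig m k x) ∧
      ∫ x : ℝ, (ψ₁ m x : ℂ) * genEig m k x = 0) := by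
  -- continuity facts
  have h1c : Continuous fun x : ℝ => ((Real.tanh (m * x) : ℝ) : ℂ) :=
    Complex.continuous_ofReal.comp (continuous_tanh'.comp (continuous_const.mul continuous_id))
  have h2c : Continuous fun x : ℝ => ((sech (m * x) : ℝ) : ℂ) :=
    Complex.continuous_ofReal.comp (continuous_sech_mul m)
  have hEc : Continuous fun x : ℝ => Complex.exp (Complex.I * (k : ℂ) * (x : ℂ)) :=
    Complex.continuous_exp.comp (continuous_const.mul Complex.continuous_ofReal)
  have hPc : Continuous (fun x : ℝ =>
      (-(k : ℂ) ^ 2 - 3 * Complex.I * (m : ℂ) * (k : ℂ) * (Real.tanh (m * x) : ℂ)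
        + 2 * (m : ℂ) ^ 2 - 3 * (m : ℂ) ^ 2 * ((sech (m * x) : ℝ) : ℂ) ^ 2)) :=
    ((continuous_const.sub (continuous_const.mul h1c)).add continuous_const).sub
      (continuous_const.mul (h2c.pow 2))
  have hgen : Continuous (genEig m k) := by
    unfold genEig
    exact ((continuous_const.mul hPc).mul hEc).div_const _
  have hψ₀c : Continuous fun x : ℝ => ((ψ₀ m x : ℝ) : ℂ) := by
    unfold ψ₀
    exact Complex.continuous_ofReal.comp (continuous_const.mul ((continuous_sech_mul m).pow 2))
  have hψ₁c : Continuous fun x : ℝ => ((ψ₁ m x : ℝ) : ℂ) := by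
    unfold ψ₁
    exact Complex.continuous_ofReal.comp
      ((continuous_const.mul (continuous_tanh'.comp (continuous_const.mul continuous_id))).mul
        (continuous_sech_mul m))
  -- bound on genEig
  set B : ℝ := ‖cNorm m k‖ * (k ^ 2 + 3 * |m| * |k| + 2 * m ^ 2 + 3 * m ^ 2) /
      ((k ^ 2 + m ^ 2) * (k ^ 2 + 4 * m ^ 2)) with hBdef
  have hBnn : 0 ≤ B := by
    have := norm_nonneg (cNorm m k)
    positivity
  have hgenle : ∀ x : ℝ, ‖genEig m k x‖ ≤ B := fun x => norm_genEig_le m k hm x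
  -- part 0
  have hbound0 : ∀ x : ℝ, ‖((ψ₀ m x : ℝ) : ℂ) * genEig m k x‖ ≤
      (Real.sqrt (3 * m / 4) * B) * sech (m * x) := by
    intro x
    rw [norm_mul, Complex.norm_real, Real.norm_eq_abs]
    have hψ : |ψ₀ m x| ≤ Real.sqrt (3 * m / 4) * sech (m * x) := by
      unfold ψ₀
      rw [abs_of_nonneg (mul_nonneg (Real.sqrt_nonneg _) (sq_nonneg _))]
      have h6 := sech_le_one (m * x)
      have h7 := (sech_pos (m * x)).le
      have h9 : sech (m * x) ^ 2 ≤ sech (m * x) := by nlinarith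
      exact mul_le_mul_of_nonneg_left h9 (Real.sqrt_nonneg _)
    calc |ψ₀ m x| * ‖genEig m k x‖ ≤ (Real.sqrt (3 * m / 4) * sech (m * x)) * B :=
        mul_le_mul hψ (hgenle x) (norm_nonneg _) (mul_nonneg (Real.sqrt_nonneg _) (sech_pos _).le)
      _ = (Real.sqrt (3 * m / 4) * B) * sech (m * x) := by ring
  have hint0 : Integrable (fun x : ℝ => ((ψ₀ m x : ℝ) : ℂ) * genEig m k x) :=
    Integrable.mono' ((integrable_sech_mul hm).const_mul (Real.sqrt (3 * m / 4) * B))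
      (hψ₀c.mul hgen).aestronglyMeasurable (Eventually.of_forall hbound0)
  have hgb0 : ∀ x : ℝ, ‖g₀ m k x‖ ≤ (‖K₀ m k‖ * (|k| + |m|)) * sech (m * x) := by
    intro x
    have e1 : ‖(1 : ℂ) - ((Real.tanh (m * x) : ℝ) : ℂ) * ((Real.tanh (m * x) : ℝ) : ℂ)‖
        ≤ sech (m * x) := by
      have he : (1 : ℂ) - ((Real.tanh (m * x) : ℝ) : ℂ) * ((Real.tanh (m * x) : ℝ) : ℂ)
          = ((sech (m * x) ^ 2 : ℝ) : ℂ) := by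
        rw [Complex.ofReal_pow, cS_sq]; ring
      rw [he, Complex.norm_real, Real.norm_eq_abs, abs_of_nonneg (by positivity)]
      have h6 := sech_le_one (m * x)
      have h7 := (sech_pos (m * x)).le
      nlinarith
    have e2 : ‖Complex.I * (k : ℂ) - (m : ℂ) * ((Real.tanh (m * x) : ℝ) : ℂ)‖
        ≤ |k| + |m| := by
      refine le_trans (norm_sub_le _ _) ?_
      simp only [norm_mul, Complex.norm_I, one_mul, Complex.norm_real, Real.norm_eq_abs]
      have h8 := abs_tanh_le_one (m * x)
      nlinarith [abs_nonneg m, abs_nonneg k, abs_nonneg (Real.tanh (m * x))]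
    unfold g₀
    rw [norm_mul, norm_mul, norm_cexp_Ikx, one_mul, norm_mul]
    refine le_trans (mul_le_mul_of_nonneg_left
      (mul_le_mul e1 e2 (norm_nonneg _) (sech_pos (m * x)).le) (norm_nonneg (K₀ m k)))
      (le_of_eq (by ring))
  have hbt0 : Tendsto (fun x : ℝ => (‖K₀ m k‖ * (|k| + |m|)) * sech (m * x)) atTop (nhds 0) := by
    simpa using (tendsto_sech_mul_atTop hm).const_mul (‖K₀ m k‖ * (|k| + |m|))
  have hbb0 : Tendsto (fun x : ℝ => (‖K₀ m k‖ * (|k| + |m|)) * sech (m * x)) atBot (nhds 0) := by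
    simpa using (tendsto_sech_mul_atBot hm).const_mul (‖K₀ m k‖ * (|k| + |m|))
  have htt0 : Tendsto (g₀ m k) atTop (nhds 0) := squeeze_zero_norm hgb0 hbt0
  have htb0 : Tendsto (g₀ m k) atBot (nhds 0) := squeeze_zero_norm hgb0 hbb0
  have hIic0 : ∫ x in Iic (0 : ℝ), ((ψ₀ m x : ℝ) : ℂ) * genEig m k x = g₀ m k 0 - 0 :=
    integral_Iic_of_hasDerivAt_of_tendsto' (fun x _ => hasDerivAt_g0 m k hm x)
      hint0.integrableOn htb0
  have hIoi0 : ∫ x in Ioi (0 : ℝ), ((ψ₀ m x : ℝ) : ℂ) * genEig m k x = 0 - g₀ m k 0 :=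
    integral_Ioi_of_hasDerivAt_of_tendsto' (fun x _ => hasDerivAt_g0 m k hm x)
      hint0.integrableOn htt0
  have hsum0 := intervalIntegral.integral_Iic_add_Ioi (b := (0 : ℝ)) hint0.integrableOn hint0.integrableOn
  rw [hIic0, hIoi0] at hsum0
  -- part 1
  have hbound1 : ∀ x : ℝ, ‖((ψ₁ m x : ℝ) : ℂ) * genEig m k x‖ ≤
      (Real.sqrt (3 * m / 2) * B) * sech (m * x) := by
    intro x
    rw [norm_mul, Complex.norm_real, Real.norm_eq_abs]
    have hψ : |ψ₁ m x| ≤ Real.sqrt (3 * m / 2) * sech (m * x) := by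
      unfold ψ₁
      rw [abs_mul, abs_mul, abs_of_nonneg (Real.sqrt_nonneg _),
        abs_of_nonneg (sech_pos (m * x)).le]
      have h8 := abs_tanh_le_one (m * x)
      have h7 := (sech_pos (m * x)).le
      have h9 : Real.sqrt (3 * m / 2) * |Real.tanh (m * x)| ≤ Real.sqrt (3 * m / 2) :=
        by nlinarith [Real.sqrt_nonneg (3 * m / 2), abs_nonneg (Real.tanh (m * x))]
      exact mul_le_mul_of_nonneg_right h9 h7
    calc |ψ₁ m x| * ‖genEig m k x‖ ≤ (Real.sqrt (3 * m / 2) * sech (m * x)) * B :=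
        mul_le_mul hψ (hgenle x) (norm_nonneg _) (mul_nonneg (Real.sqrt_nonneg _) (sech_pos _).le)
      _ = (Real.sqrt (3 * m / 2) * B) * sech (m * x) := by ring
  have hint1 : Integrable (fun x : ℝ => ((ψ₁ m x : ℝ) : ℂ) * genEig m k x) :=
    Integrable.mono' ((integrable_sech_mul hm).const_mul (Real.sqrt (3 * m / 2) * B))
      (hψ₁c.mul hgen).aestronglyMeasurable (Eventually.of_forall hbound1)
  have hgb1 : ∀ x : ℝ, ‖g₁ m k x‖ ≤ (‖K₁ m k‖ * (|k| + 2 * |m|)) * sech (m * x) := by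
    intro x
    have e1 : ‖((sech (m * x) : ℝ) : ℂ)‖ = sech (m * x) := by
      rw [Complex.norm_real, Real.norm_eq_abs, abs_of_nonneg (sech_pos (m * x)).le]
    have e2 : ‖Complex.I * (k : ℂ) * ((Real.tanh (m * x) : ℝ) : ℂ) -
        (m : ℂ) * (1 + ((Real.tanh (m * x) : ℝ) : ℂ) * ((Real.tanh (m * x) : ℝ) : ℂ))‖
        ≤ |k| + 2 * |m| := by
      refine le_trans (norm_sub_le _ _) ?_
      have e3 : ‖Complex.I * (k : ℂ) * ((Real.tanh (m * x) : ℝ) : ℂ)‖ ≤ |k| := by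
        simp only [norm_mul, Complex.norm_I, one_mul, Complex.norm_real, Real.norm_eq_abs]
        have h8 := abs_tanh_le_one (m * x)
        nlinarith [abs_nonneg k, abs_nonneg (Real.tanh (m * x))]
      have e4 : ‖(m : ℂ) * (1 + ((Real.tanh (m * x) : ℝ) : ℂ) * ((Real.tanh (m * x) : ℝ) : ℂ))‖
          ≤ 2 * |m| := by
        rw [norm_mul, Complex.norm_real, Real.norm_eq_abs]
        have e5 : ‖(1 : ℂ) + ((Real.tanh (m * x) : ℝ) : ℂ) * ((Real.tanh (m * x) : ℝ) : ℂ)‖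
            ≤ 2 := by
          have he : (1 : ℂ) + ((Real.tanh (m * x) : ℝ) : ℂ) * ((Real.tanh (m * x) : ℝ) : ℂ)
              = (((1 + Real.tanh (m * x) * Real.tanh (m * x)) : ℝ) : ℂ) := by push_cast; ring
          rw [he, Complex.norm_real, Real.norm_eq_abs, abs_of_nonneg (by nlinarith [sq_nonneg (Real.tanh (m * x))])]
          have h8 := abs_tanh_le_one (m * x)
          nlinarith [abs_nonneg (Real.tanh (m * x)), sq_abs (Real.tanh (m * x))]
        calc |m| * ‖(1 : ℂ) + ((Real.tanh (m * x) : ℝ) : ℂ) * ((Real.tanh (m * x) : ℝ) : ℂ)‖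
            ≤ |m| * 2 := mul_le_mul_of_nonneg_left e5 (abs_nonneg m)
          _ = 2 * |m| := by ring
      linarith
    unfold g₁
    rw [norm_mul, norm_mul, norm_cexp_Ikx, one_mul, norm_mul, e1]
    refine le_trans (mul_le_mul_of_nonneg_left
      (mul_le_mul_of_nonneg_left e2 (sech_pos (m * x)).le) (norm_nonneg (K₁ m k)))
      (le_of_eq (by ring))
  have hbt1 : Tendsto (fun x : ℝ => (‖K₁ m k‖ * (|k| + 2 * |m|)) * sech (m * x)) atTop (nhds 0) := by
    simpa using (tendsto_sech_mul_atTop hm).const_mul (‖K₁ m k‖ * (|k| + 2 * |m|))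
  have hbb1 : Tendsto (fun x : ℝ => (‖K₁ m k‖ * (|k| + 2 * |m|)) * sech (m * x)) atBot (nhds 0) := by
    simpa using (tendsto_sech_mul_atBot hm).const_mul (‖K₁ m k‖ * (|k| + 2 * |m|))
  have htt1 : Tendsto (g₁ m k) atTop (nhds 0) := squeeze_zero_norm hgb1 hbt1
  have htb1 : Tendsto (g₁ m k) atBot (nhds 0) := squeeze_zero_norm hgb1 hbb1
  have hIic1 : ∫ x in Iic (0 : ℝ), ((ψ₁ m x : ℝ) : ℂ) * genEig m k x = g₁ m k 0 - 0 :=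
    integral_Iic_of_hasDerivAt_of_tendsto' (fun x _ => hasDerivAt_g1 m k hm x)
      hint1.integrableOn htb1
  have hIoi1 : ∫ x in Ioi (0 : ℝ), ((ψ₁ m x : ℝ) : ℂ) * genEig m k x = 0 - g₁ m k 0 :=
    integral_Ioi_of_hasDerivAt_of_tendsto' (fun x _ => hasDerivAt_g1 m k hm x)
      hint1.integrableOn htt1
  have hsum1 := intervalIntegral.integral_Iic_add_Ioi (b := (0 : ℝ)) hint1.integrableOn hint1.integrableOn
  rw [hIic1, hIoi1] at hsum1
  refine ⟨⟨hint0, ?_⟩, ⟨hint1, ?_⟩⟩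
  · rw [← hsum0]; ring
  · rw [← hsum1]; ring
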